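/- The morphism K^MW_*(F) → W(F)[t, t⁻¹] sending [u] to t⁻¹(⟨u⟩ - 1) and η to t induces an isomorphism K^MW_*(F)[η⁻¹] ≅ W(F)[t, t⁻¹]. -/

import Mathlib

noncomputable section

/-- Generators of the Milnor–Witt K-theory ring: a symbol `[u]` for each unit `u`
and the element `η`. -/
inductive MWGen (F : Type) [Field F] : Type
  | of : Fˣ → MWGen F
  | eta : MWGen F

/-- The defining relations KMW1–KMW4 of Milnor–Witt K-theory, imposed on the free
(noncommutative) ℤ-algebra on the generators. -/
inductive MWRel (F : Type) [Field F] :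
    FreeAlgebra ℤ (MWGen F) → FreeAlgebra ℤ (MWGen F) → Prop
  | steinberg (a : Fˣ) (h1 : (a : F) ≠ 1) :
      MWRel F
        (FreeAlgebra.ι ℤ (MWGen.of a) *
          FreeAlgebra.ι ℤ (MWGen.of (Units.mk0 (1 - (a : F)) (sub_ne_zero_of_ne h1.symm))))
        0
  | mul_rel (a b : Fˣ) :
      MWRel F (FreeAlgebra.ι ℤ (MWGen.of (a * b)))
        (FreeAlgebra.ι ℤ (MWGen.of a) + FreeAlgebra.ι ℤ (MWGen.of b) +
          FreeAlgebra.ι ℤ MWGen.eta * FreeAlgebra.ι ℤ (MWGen.of a) *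
            FreeAlgebra.ι ℤ (MWGen.of b))
  | comm_rel (u : Fˣ) :
      MWRel F (FreeAlgebra.ι ℤ MWGen.eta * FreeAlgebra.ι ℤ (MWGen.of u))
        (FreeAlgebra.ι ℤ (MWGen.of u) * FreeAlgebra.ι ℤ MWGen.eta)
  | hyp :
      MWRel F
        (FreeAlgebra.ι ℤ MWGen.eta *
          (FreeAlgebra.ι ℤ MWGen.eta * FreeAlgebra.ι ℤ (MWGen.of (-1)) + 2))
        0

/-- The Milnor–Witt K-theory ring `K^MW_*(F)` (all degrees together). -/
def KMW (F : Type) [Field F] : Type := RingQuot (MWRel F)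

instance (F : Type) [Field F] : Ring (KMW F) := inferInstanceAs (Ring (RingQuot (MWRel F)))

/-- The symbol `[u] ∈ K^MW_1(F)`. -/
def mw {F : Type} [Field F] (u : Fˣ) : KMW F :=
  RingQuot.mkRingHom (MWRel F) (FreeAlgebra.ι ℤ (MWGen.of u))

/-- The element `η ∈ K^MW_{-1}(F)`. -/
def mweta (F : Type) [Field F] : KMW F :=
  RingQuot.mkRingHom (MWRel F) (FreeAlgebra.ι ℤ MWGen.eta)

/-- The degree-`n` homogeneous component of `K^MW_*(F)`: the additive subgroup spanned
by the monomials `η^m [u₁]⋯[u_r]` with `r - m = n`. -/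
def KMWcomp (F : Type) [Field F] (n : ℤ) : AddSubgroup (KMW F) :=
  AddSubgroup.closure {x | ∃ (m r : ℕ) (v : Fin r → Fˣ),
    (r : ℤ) - (m : ℤ) = n ∧ x = (mweta F) ^ m * (List.ofFn fun i => mw (v i)).prod}

/-- The defining relations of the Grothendieck–Witt ring `GW(F)`, presented as a
commutative ring with generators `⟨u⟩` for `u ∈ Fˣ`: the additive relations
GW1–GW3 together with multiplicativity of the symbols. -/
inductive GWRel (F : Type) [Field F] :
    MvPolynomial Fˣ ℤ → MvPolynomial Fˣ ℤ → Prop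
  | sq (u v : Fˣ) : GWRel F (MvPolynomial.X (u * v ^ 2)) (MvPolynomial.X u)
  | hyp (u : Fˣ) :
      GWRel F (MvPolynomial.X u + MvPolynomial.X (-u))
        (1 + MvPolynomial.X (-1 : Fˣ))
  | add (u v : Fˣ) (h : (u : F) + (v : F) ≠ 0) :
      GWRel F (MvPolynomial.X u + MvPolynomial.X v)
        (MvPolynomial.X (Units.mk0 ((u : F) + (v : F)) h) +
          MvPolynomial.X (Units.mk0 ((u : F) + (v : F)) h * u * v))
  | mul (u v : Fˣ) :
      GWRel F (MvPolynomial.X u * MvPolynomial.X v) (MvPolynomial.X (u * v))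
  | one : GWRel F (MvPolynomial.X (1 : Fˣ)) 1

/-- The Grothendieck–Witt ring `GW(F)` of the field `F`, via its presentation. -/
def GW (F : Type) [Field F] : Type := RingQuot (GWRel F)

instance (F : Type) [Field F] : CommRing (GW F) :=
  inferInstanceAs (CommRing (RingQuot (GWRel F)))

/-- The generator `⟨u⟩ ∈ GW(F)`. -/
def gw {F : Type} [Field F] (u : Fˣ) : GW F :=
  RingQuot.mkRingHom (GWRel F) (MvPolynomial.X u)

/-- The hyperbolic element `h = 1 + ⟨-1⟩ ∈ GW(F)`. -/
def hGW (F : Type) [Field F] : GW F := 1 + gw (-1 : Fˣ)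

/-- The Witt ring `W(F) := GW(F)/(h)`. -/
def WittRing (F : Type) [Field F] : Type := GW F ⧸ Ideal.span {hGW F}

instance (F : Type) [Field F] : CommRing (WittRing F) :=
  inferInstanceAs (CommRing (GW F ⧸ Ideal.span {hGW F}))

/-- The quotient map `GW(F) → W(F)`. -/
def wq (F : Type) [Field F] : GW F →+* WittRing F :=
  Ideal.Quotient.mk (Ideal.span {hGW F})

section KMWLemmas

variable {F : Type} [Field F]

/-- The class `⟨u⟩ = 1 + η[u]` in `K^MW_0`. -/
def gwK (u : Fˣ) : KMW F := 1 + mweta F * mw u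

lemma mw_mul (a b : Fˣ) :
    mw (a * b) = mw a + mw b + mweta F * mw a * mw b := by
  have h := RingQuot.mkRingHom_rel (MWRel.mul_rel (F := F) a b)
  simp [mw, mweta, map_add, map_mul] at h
  exact h

lemma eta_mw (u : Fˣ) : mweta F * mw u = mw u * mweta F := by
  have h := RingQuot.mkRingHom_rel (MWRel.comm_rel (F := F) u)
  simp [mw, mweta, map_mul] at h
  exact h

lemma eta_hyp : mweta F * (mweta F * mw (-1 : Fˣ) + 2) = 0 := by
  have h := RingQuot.mkRingHom_rel (MWRel.hyp (F := F))
  simp [mw, mweta, map_mul, map_add, map_ofNat] at h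
  exact h

lemma eta_comm (x : KMW F) : mweta F * x = x * mweta F := by
  obtain ⟨y, rfl⟩ := RingQuot.mkRingHom_surjective (MWRel F) x
  induction y using FreeAlgebra.induction with
  | grade0 a =>
      have : (RingQuot.mkRingHom (MWRel F)) (algebraMap ℤ (FreeAlgebra ℤ (MWGen F)) a)
          = ((a : ℤ) : KMW F) := by
        erw [algebraMap_int_eq, eq_intCast, map_intCast]
        rfl
      rw [this]
      exact (Int.cast_commute a _).symm.eq
  | grade1 g =>
      cases g with
      | of u => exact eta_mw u
      | eta => rfl
  | mul a b ha hb =>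
      erw [map_mul, ← mul_assoc, ha, mul_assoc, hb, mul_assoc]
  | add a b ha hb =>
      rw [map_add]
      exact (mul_add (mweta F) (RingQuot.mkRingHom (MWRel F) a) (RingQuot.mkRingHom (MWRel F) b)).trans
        ((congrArg₂ (· + ·) ha hb).trans (add_mul _ _ (mweta F)).symm)

lemma mw_steinberg {a b : Fˣ} (hab : (a : F) + (b : F) = 1) :
    mw a * mw b = 0 := by
  have ha1 : (a : F) ≠ 1 := by
    intro h
    apply b.ne_zero
    rw [h] at hab
    linear_combination hab
  have hb : b = Units.mk0 (1 - (a : F)) (sub_ne_zero_of_ne (Ne.symm ha1)) := by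
    ext
    simp only [Units.val_mk0]
    linear_combination hab
  have h := RingQuot.mkRingHom_rel (MWRel.steinberg (F := F) a ha1)
  rw [hb]
  simp [mw, map_mul] at h
  exact h

end KMWLemmas
section KMWCalc

variable {F : Type} [Field F]

lemma Eswap (x : KMW F) : x * mweta F = mweta F * x := (eta_comm x).symm

lemma Epull (u : Fˣ) (y : KMW F) :
    mweta F * (mw u * y) = mw u * (mweta F * y) := by
  rw [← mul_assoc, eta_mw, mul_assoc]

lemma eta_sq_neg_one :
    mweta F * (mweta F * mw (-1 : Fˣ)) = -(2 * mweta F) := by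
  have h := eta_hyp (F := F)
  rw [mul_add] at h
  have h2 : mweta F * 2 = 2 * mweta F := by rw [mul_two, two_mul]
  rw [h2] at h
  exact eq_neg_of_add_eq_zero_left h

lemma mw_one_aux :
    mw (1 : Fˣ) + mweta F * mw 1 * mw 1 = 0 := by
  have h := (mw_mul (1 : Fˣ) 1).symm
  rw [one_mul, add_assoc] at h
  exact add_eq_left.mp h

lemma eta_sq_mw_one : mweta F * (mweta F * mw (1 : Fˣ)) = 0 := by
  have h3 : mw (1 : Fˣ) = mw (-1) + mw (-1) + mweta F * mw (-1) * mw (-1) := by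
    have h := mw_mul (-1 : Fˣ) (-1)
    rwa [neg_mul_neg, one_mul] at h
  have hA : mweta F * (mweta F * (mweta F * mw (-1 : Fˣ) * mw (-1))) =
      2 * (2 * mweta F) := by
    calc mweta F * (mweta F * (mweta F * mw (-1 : Fˣ) * mw (-1)))
        = mweta F * (mweta F * (mweta F * mw (-1 : Fˣ))) * mw (-1) := by noncomm_ring
      _ = mweta F * -(2 * mweta F) * mw (-1) := by rw [eta_sq_neg_one]
      _ = -(2 * (mweta F * (mweta F * mw (-1 : Fˣ)))) := by noncomm_ring
      _ = -(2 * -(2 * mweta F)) := by rw [eta_sq_neg_one]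
      _ = 2 * (2 * mweta F) := by noncomm_ring
  calc mweta F * (mweta F * mw (1 : Fˣ))
      = mweta F * (mweta F * (mw (-1) + mw (-1) + mweta F * mw (-1) * mw (-1))) := by
        rw [← h3]
    _ = mweta F * (mweta F * mw (-1 : Fˣ)) + mweta F * (mweta F * mw (-1 : Fˣ)) +
        mweta F * (mweta F * (mweta F * mw (-1 : Fˣ) * mw (-1))) := by
        rw [mul_add, mul_add, mul_add, mul_add]
    _ = -(2 * mweta F) + -(2 * mweta F) + 2 * (2 * mweta F) := by
        rw [hA, eta_sq_neg_one]
    _ = 0 := by noncomm_ring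

lemma eta_mw_one : mweta F * mw (1 : Fˣ) = 0 := by
  have h2 : mweta F * (mw (1 : Fˣ) + mweta F * mw 1 * mw 1) = 0 := by
    rw [mw_one_aux, mul_zero]
  rw [mul_add,
    show mweta F * (mweta F * mw (1 : Fˣ) * mw 1)
      = mweta F * (mweta F * mw (1 : Fˣ)) * mw 1 by noncomm_ring,
    eta_sq_mw_one, zero_mul, add_zero] at h2
  exact h2

lemma mw_one : mw (1 : Fˣ) = 0 := by
  have h := mw_one_aux (F := F)
  rw [eta_mw_one, zero_mul, add_zero] at h
  exact h

lemma gwK_mul (a b : Fˣ) : gwK (a * b) = gwK a * gwK b := by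
  unfold gwK
  rw [mw_mul]
  have hc : mw a * (mweta F * mw b) = mweta F * (mw a * mw b) := (Epull a (mw b)).symm
  have r : (1 + mweta F * mw a) * (1 + mweta F * mw b) =
      1 + (mweta F * mw a + mweta F * mw b + mweta F * (mw a * (mweta F * mw b))) := by
    noncomm_ring
  rw [r, hc]
  noncomm_ring

lemma gwK_one : gwK (1 : Fˣ) = 1 := by
  unfold gwK
  rw [mw_one, mul_zero, add_zero]

lemma mw_inv (u : Fˣ) :
    mw u + mw u⁻¹ + mweta F * mw u * mw u⁻¹ = 0 := by
  have h := mw_mul u u⁻¹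
  rw [mul_inv_cancel, mw_one] at h
  exact h.symm

end KMWCalc
section KMWCalc2

variable {F : Type} [Field F]

lemma gwK_mul_inv (u : Fˣ) : gwK u * gwK u⁻¹ = 1 := by
  rw [← gwK_mul, mul_inv_cancel, gwK_one]

/-- `[u][-u] = 0` in Milnor–Witt K-theory. -/
lemma mw_mul_neg (u : Fˣ) : mw u * mw (-u) = 0 := by
  by_cases hu : (u : F) = 1
  · have h1 : u = 1 := Units.ext hu
    rw [h1, mw_one, zero_mul]
  · have hui : ((u⁻¹ : Fˣ) : F) ≠ 1 := by
      intro h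
      have h2 : u = 1 := inv_eq_one.mp (Units.ext h)
      exact hu (by rw [h2, Units.val_one])
    set bu : Fˣ := Units.mk0 (1 - (u : F)) (sub_ne_zero_of_ne (Ne.symm hu)) with hbu
    set wu : Fˣ := Units.mk0 (1 - ((u⁻¹ : Fˣ) : F)) (sub_ne_zero_of_ne (Ne.symm hui)) with hwu
    have st1 : mw u * mw bu = 0 := mw_steinberg (by rw [hbu, Units.val_mk0]; ring)
    have st2 : mw u⁻¹ * mw wu = 0 := mw_steinberg (by rw [hwu, Units.val_mk0]; ring)
    -- [u][wu] = 0
    have e1 : mw u * mw wu = 0 := by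
      have h := mw_inv u
      rw [add_assoc] at h
      have h2 : mw u = -(mw u⁻¹ + mweta F * mw u * mw u⁻¹) :=
        eq_neg_of_add_eq_zero_left h
      calc mw u * mw wu
          = -(mw u⁻¹ + mweta F * mw u * mw u⁻¹) * mw wu := by rw [← h2]
        _ = -(mw u⁻¹ * mw wu) + -(mweta F * mw u * (mw u⁻¹ * mw wu)) := by noncomm_ring
        _ = 0 := by rw [st2]; simp
    -- [u][wu⁻¹] = 0
    have e2 : mw u * mw wu⁻¹ = 0 := by
      have h := mw_inv wu⁻¹
      rw [inv_inv, add_assoc] at h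
      have h2 : mw wu⁻¹ = -(mw wu + mweta F * mw wu⁻¹ * mw wu) :=
        eq_neg_of_add_eq_zero_left h
      have key : mw u * (mweta F * (mw wu⁻¹ * mw wu)) =
          mw u * mw wu⁻¹ * (mweta F * mw wu) := by
        rw [Epull wu⁻¹ (mw wu), ← mul_assoc]
      have h3 : mw u * mw wu⁻¹ = -(mw u * mw wu⁻¹ * (mweta F * mw wu)) := by
        calc mw u * mw wu⁻¹
            = mw u * -(mw wu + mweta F * mw wu⁻¹ * mw wu) := by rw [← h2]
          _ = -(mw u * mw wu) + -(mw u * (mweta F * (mw wu⁻¹ * mw wu))) := by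
              noncomm_ring
          _ = -(mw u * mw wu) + -(mw u * mw wu⁻¹ * (mweta F * mw wu)) := by rw [key]
          _ = -(mw u * mw wu⁻¹ * (mweta F * mw wu)) := by rw [e1]; simp
      have h4 : mw u * mw wu⁻¹ * gwK wu = 0 := by
        show mw u * mw wu⁻¹ * (1 + mweta F * mw wu) = 0
        rw [mul_add, mul_one]
        nth_rewrite 1 [h3]
        noncomm_ring
      calc mw u * mw wu⁻¹
          = mw u * mw wu⁻¹ * (gwK wu * gwK wu⁻¹) := by rw [gwK_mul_inv, mul_one]
        _ = mw u * mw wu⁻¹ * gwK wu * gwK wu⁻¹ := by noncomm_ring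
        _ = 0 := by rw [h4, zero_mul]
    -- -u = bu * wu⁻¹
    have hneg : -u = bu * wu⁻¹ := by
      have hu0 : (u : F) ≠ 0 := u.ne_zero
      have h2 : (-1 : F) + (u : F) ≠ 0 := by
        intro h; apply hu; linear_combination h
      ext
      rw [Units.val_mul, hbu, hwu]
      simp only [Units.val_mk0, Units.val_inv_eq_inv_val, Units.val_neg]
      field_simp
      ring
    rw [hneg, mw_mul]
    have hz : mw u * (mw bu * mw wu⁻¹) = 0 := by
      rw [← mul_assoc, st1, zero_mul]
    calc mw u * (mw bu + mw wu⁻¹ + mweta F * mw bu * mw wu⁻¹)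
        = mw u * mw bu + mw u * mw wu⁻¹ +
            mw u * (mweta F * (mw bu * mw wu⁻¹)) := by noncomm_ring
      _ = mw u * mw bu + mw u * mw wu⁻¹ +
            mweta F * (mw u * (mw bu * mw wu⁻¹)) := by rw [← Epull u]
      _ = 0 := by rw [st1, e2, hz, mul_zero, add_zero, add_zero]

end KMWCalc2
section KMWCalc3

variable {F : Type} [Field F]

lemma eta_sq_sq (v : Fˣ) :
    2 * (mweta F * mw v) + mweta F * (mweta F * (mw v * mw v)) = 0 := by
  have h0 : mw (-v) = mw (-1) + mw v + mweta F * mw (-1) * mw v := by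
    have hn : (-v : Fˣ) = -1 * v := by ext; simp
    rw [hn, mw_mul]
  have hz : mw v * mw (-1) + mw v * mw v + mw v * (mweta F * (mw (-1) * mw v)) = 0 := by
    have h := mw_mul_neg v
    rw [h0] at h
    calc mw v * mw (-1) + mw v * mw v + mw v * (mweta F * (mw (-1) * mw v))
        = mw v * (mw (-1) + mw v + mweta F * mw (-1) * mw v) := by noncomm_ring
      _ = 0 := h
  have a1 : mweta F * (mweta F * (mw v * mw (-1))) = -(2 * (mweta F * mw v)) := by
    calc mweta F * (mweta F * (mw v * mw (-1)))
        = mweta F * (mw v * (mweta F * mw (-1))) := by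
          rw [Epull v (mw (-1 : Fˣ))]
      _ = mw v * (mweta F * (mweta F * mw (-1))) := by
          rw [Epull v (mweta F * mw (-1 : Fˣ))]
      _ = mw v * -(2 * mweta F) := by rw [eta_sq_neg_one]
      _ = -(2 * (mw v * mweta F)) := by noncomm_ring
      _ = -(2 * (mweta F * mw v)) := by rw [Eswap]
  have a1' : mweta F * (mweta F * (mw (-1) * mw v)) = -(2 * (mweta F * mw v)) := by
    calc mweta F * (mweta F * (mw (-1) * mw v))
        = mweta F * (mweta F * mw (-1)) * mw v := by noncomm_ring
      _ = -(2 * mweta F) * mw v := by rw [eta_sq_neg_one]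
      _ = -(2 * (mweta F * mw v)) := by noncomm_ring
  have a3 : mweta F * (mweta F * (mw v * (mweta F * (mw (-1) * mw v)))) =
      -(2 * (mweta F * (mweta F * (mw v * mw v)))) := by
    calc mweta F * (mweta F * (mw v * (mweta F * (mw (-1) * mw v))))
        = mweta F * (mw v * (mweta F * (mweta F * (mw (-1) * mw v)))) := by
          rw [Epull v (mweta F * (mw (-1 : Fˣ) * mw v))]
      _ = mw v * (mweta F * (mweta F * (mweta F * (mw (-1) * mw v)))) := by
          rw [Epull v (mweta F * (mweta F * (mw (-1 : Fˣ) * mw v)))]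
      _ = mw v * (mweta F * -(2 * (mweta F * mw v))) := by rw [a1']
      _ = -(2 * (mw v * (mweta F * (mweta F * mw v)))) := by noncomm_ring
      _ = -(2 * (mweta F * (mw v * (mweta F * mw v)))) := by
          rw [Epull v (mweta F * mw v)]
      _ = -(2 * (mweta F * (mweta F * (mw v * mw v)))) := by
          rw [Epull v (mw v)]
  have hz2 : mweta F * (mweta F * (mw v * mw (-1))) +
      mweta F * (mweta F * (mw v * mw v)) +
      mweta F * (mweta F * (mw v * (mweta F * (mw (-1) * mw v)))) = 0 := by
    have h2 := congrArg (fun z => mweta F * (mweta F * z)) hz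
    simp only [mul_zero] at h2
    calc mweta F * (mweta F * (mw v * mw (-1))) +
        mweta F * (mweta F * (mw v * mw v)) +
        mweta F * (mweta F * (mw v * (mweta F * (mw (-1) * mw v))))
        = mweta F * (mweta F * (mw v * mw (-1) + mw v * mw v +
            mw v * (mweta F * (mw (-1) * mw v)))) := by noncomm_ring
      _ = 0 := h2
  rw [a1, a3] at hz2
  have hrw : 2 * (mweta F * mw v) + mweta F * (mweta F * (mw v * mw v)) =
      -(-(2 * (mweta F * mw v)) + mweta F * (mweta F * (mw v * mw v)) +
        -(2 * (mweta F * (mweta F * (mw v * mw v))))) := by noncomm_ring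
  rw [hrw, hz2, neg_zero]

lemma gwK_sq (v : Fˣ) : gwK (v * v) = 1 := by
  unfold gwK
  rw [mw_mul v v]
  have expand : mweta F * (mw v + mw v + mweta F * mw v * mw v) =
      2 * (mweta F * mw v) + mweta F * (mweta F * (mw v * mw v)) := by noncomm_ring
  rw [expand, eta_sq_sq, add_zero]

lemma krel_sq (u v : Fˣ) : gwK (u * v ^ 2) = gwK u := by
  rw [pow_two, gwK_mul, gwK_sq, mul_one]

lemma krel_hyp (u : Fˣ) : gwK u + gwK (-u) = 1 + gwK (-1) := by
  have hexp : mw (-u) = mw (-1) + mw u + mweta F * mw (-1) * mw u := by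
    have hn : (-u : Fˣ) = -1 * u := by ext; simp
    rw [hn, mw_mul]
  have hc : mweta F * (mweta F * mw (-1) * mw u) = -(2 * (mweta F * mw u)) := by
    calc mweta F * (mweta F * mw (-1) * mw u)
        = mweta F * (mweta F * mw (-1)) * mw u := by noncomm_ring
      _ = -(2 * mweta F) * mw u := by rw [eta_sq_neg_one]
      _ = -(2 * (mweta F * mw u)) := by noncomm_ring
  unfold gwK
  rw [hexp, mul_add, mul_add, hc]
  noncomm_ring

lemma krel_add (u v : Fˣ) (h : (u : F) + (v : F) ≠ 0) :
    gwK u + gwK v = gwK (Units.mk0 ((u : F) + (v : F)) h) +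
      gwK (Units.mk0 ((u : F) + (v : F)) h * u * v) := by
  set s : Fˣ := Units.mk0 ((u : F) + (v : F)) h with hs
  set a : Fˣ := u * s⁻¹ with ha
  set b : Fˣ := v * s⁻¹ with hb
  have hab : (a : F) + (b : F) = 1 := by
    rw [ha, hb, Units.val_mul, Units.val_mul, Units.val_inv_eq_inv_val, hs, Units.val_mk0]
    field_simp
  have hst : mw a * mw b = 0 := mw_steinberg hab
  have key : gwK a + gwK b = 1 + gwK a * gwK b := by
    rw [← gwK_mul]
    unfold gwK
    rw [mw_mul a b]
    have h1 : mweta F * (mw a + mw b + mweta F * mw a * mw b) =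
        mweta F * mw a + mweta F * mw b + mweta F * (mweta F * (mw a * mw b)) := by
      noncomm_ring
    rw [h1, hst, mul_zero, mul_zero, add_zero]
    abel
  have hu' : u = s * a := by
    rw [ha, mul_comm u s⁻¹, ← mul_assoc, mul_inv_cancel, one_mul]
  have hv' : v = s * b := by
    rw [hb, mul_comm v s⁻¹, ← mul_assoc, mul_inv_cancel, one_mul]
  have hsuv : s * (s * a) * (s * b) = s * s * (s * (a * b)) := by
    ext
    simp only [Units.val_mul]
    ring
  calc gwK u + gwK v
      = gwK (s * a) + gwK (s * b) := by rw [← hu', ← hv']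
    _ = gwK s * gwK a + gwK s * gwK b := by rw [gwK_mul s a, gwK_mul s b]
    _ = gwK s * (gwK a + gwK b) := by rw [mul_add]
    _ = gwK s * (1 + gwK a * gwK b) := by rw [key]
    _ = gwK s + gwK s * (gwK a * gwK b) := by rw [mul_add, mul_one]
    _ = gwK s + gwK (s * u * v) := by
        rw [hu', hv', hsuv, gwK_mul (s * s), gwK_sq, one_mul, gwK_mul s (a * b),
          gwK_mul a b]

end KMWCalc3
section GWSide

variable {F : Type} [Field F]

lemma gw_mul (u v : Fˣ) : gw u * gw v = gw (u * v) := by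
  have h := RingQuot.mkRingHom_rel (GWRel.mul (F := F) u v)
  simp [gw, map_mul] at h
  exact h

lemma gw_one : gw (1 : Fˣ) = (1 : GW F) := by
  have h := RingQuot.mkRingHom_rel (GWRel.one (F := F))
  simp [gw, map_one] at h
  exact h

lemma gw_add (u v : Fˣ) (h : (u : F) + (v : F) ≠ 0) :
    gw u + gw v = gw (Units.mk0 ((u : F) + (v : F)) h) +
      gw (Units.mk0 ((u : F) + (v : F)) h * u * v) := by
  have hh := RingQuot.mkRingHom_rel (GWRel.add (F := F) u v h)
  simp [gw, map_add] at hh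
  exact hh

lemma gw_steinberg {a b : Fˣ} (hab : (a : F) + (b : F) = 1) :
    (gw a - 1) * (gw b - 1) = (0 : GW F) := by
  have h : (a : F) + (b : F) ≠ 0 := by rw [hab]; exact one_ne_zero
  have h1 := gw_add a b h
  have hone : Units.mk0 ((a : F) + (b : F)) h = 1 := Units.ext (by simpa using hab)
  rw [hone, one_mul, gw_one] at h1
  have h2 := gw_mul a b
  linear_combination h2 - h1

lemma wq_hGW : wq F (hGW F) = 0 :=
  Ideal.Quotient.eq_zero_iff_mem.mpr (Ideal.subset_span (Set.mem_singleton _))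

lemma wq_neg_one : wq F (gw (-1 : Fˣ)) + 1 = 0 := by
  have h := wq_hGW (F := F)
  unfold hGW at h
  rw [map_add, map_one] at h
  linear_combination h

/-- The generator images for the morphism `K^MW_*(F) → W(F)[t,t⁻¹]`. -/
noncomputable def mwImg : MWGen F → LaurentPolynomial (WittRing F)
  | .of u => LaurentPolynomial.T (-1) * (LaurentPolynomial.C (wq F (gw u)) - 1)
  | .eta => LaurentPolynomial.T 1

/-- Its extension to the free algebra. -/
noncomputable def mwFree : FreeAlgebra ℤ (MWGen F) →ₐ[ℤ] LaurentPolynomial (WittRing F) :=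
  FreeAlgebra.lift ℤ mwImg

lemma ts_mul_t : (LaurentPolynomial.T 1 : LaurentPolynomial (WittRing F)) *
    LaurentPolynomial.T (-1) = 1 := by
  rw [← LaurentPolynomial.T_add]
  norm_num

lemma mwFree_rel : ∀ ⦃x y⦄, MWRel F x y →
    (mwFree (F := F)).toRingHom x = (mwFree (F := F)).toRingHom y := by
  intro x y hr
  cases hr with
  | steinberg a h1 =>
      simp only [AlgHom.toRingHom_eq_coe, RingHom.coe_coe, map_mul, map_zero,
        mwFree, FreeAlgebra.lift_ι_apply, mwImg]
      set b : Fˣ := Units.mk0 (1 - (a : F)) (sub_ne_zero_of_ne h1.symm) with hb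
      have hab : (a : F) + (b : F) = 1 := by rw [hb, Units.val_mk0]; ring
      have hzW : (wq F (gw a) - 1) * (wq F (gw b) - 1) = 0 := by
        have := congrArg (wq F) (gw_steinberg hab)
        simpa [map_mul, map_sub, map_one] using this
      have hC : (LaurentPolynomial.C (wq F (gw a)) - 1) *
          (LaurentPolynomial.C (wq F (gw b)) - 1) = 0 := by
        rw [show LaurentPolynomial.C (wq F (gw a)) - 1
            = LaurentPolynomial.C (wq F (gw a) - 1) by rw [map_sub, map_one]]
        rw [show LaurentPolynomial.C (wq F (gw b)) - 1
            = LaurentPolynomial.C (wq F (gw b) - 1) by rw [map_sub, map_one]]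
        rw [← map_mul, hzW, map_zero]
      linear_combination (LaurentPolynomial.T (-1) *
        LaurentPolynomial.T (-1)) * hC
  | mul_rel a b =>
      simp only [AlgHom.toRingHom_eq_coe, RingHom.coe_coe, map_mul, map_add,
        mwFree, FreeAlgebra.lift_ι_apply, mwImg]
      have hXY : LaurentPolynomial.C (wq F (gw (a * b))) =
          LaurentPolynomial.C (wq F (gw a)) * LaurentPolynomial.C (wq F (gw b)) := by
        rw [← map_mul, ← map_mul, gw_mul]
      rw [hXY]
      linear_combination (-(LaurentPolynomial.T (-1) *
        (LaurentPolynomial.C (wq F (gw a)) - 1) *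
        (LaurentPolynomial.C (wq F (gw b)) - 1))) * ts_mul_t (F := F)
  | comm_rel u =>
      simp only [AlgHom.toRingHom_eq_coe, RingHom.coe_coe, map_mul,
        mwFree, FreeAlgebra.lift_ι_apply, mwImg]
      ring
  | hyp =>
      simp only [AlgHom.toRingHom_eq_coe, RingHom.coe_coe, map_mul, map_add,
        map_ofNat, map_zero, mwFree, FreeAlgebra.lift_ι_apply, mwImg]
      have hC : LaurentPolynomial.C (wq F (gw (-1 : Fˣ))) + 1 =
          (0 : LaurentPolynomial (WittRing F)) := by
        rw [show (1 : LaurentPolynomial (WittRing F)) = LaurentPolynomial.C 1 from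
          (map_one _).symm, ← map_add, wq_neg_one, map_zero]
      linear_combination (LaurentPolynomial.T 1) * hC +
        (LaurentPolynomial.T 1 * (LaurentPolynomial.C (wq F (gw (-1 : Fˣ))) - 1)) *
          ts_mul_t (F := F)

/-- The morphism `K^MW_*(F) → W(F)[t,t⁻¹]`. -/
noncomputable def mwL : KMW F →+* LaurentPolynomial (WittRing F) :=
  RingQuot.lift ⟨(mwFree (F := F)).toRingHom, mwFree_rel⟩

lemma mwL_mw (u : Fˣ) : mwL (mw u) =
    LaurentPolynomial.T (-1) * (LaurentPolynomial.C (wq F (gw u)) - 1) := by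
  refine ((RingQuot.lift_mkRingHom_apply (mwFree (F := F)).toRingHom mwFree_rel
    (FreeAlgebra.ι ℤ (MWGen.of u))).trans ?_)
  simp [mwFree, FreeAlgebra.lift_ι_apply, mwImg]

lemma mwL_eta : mwL (mweta F) = LaurentPolynomial.T 1 := by
  refine ((RingQuot.lift_mkRingHom_apply (mwFree (F := F)).toRingHom mwFree_rel
    (FreeAlgebra.ι ℤ MWGen.eta)).trans ?_)
  simp [mwFree, FreeAlgebra.lift_ι_apply, mwImg]

end GWSide
section Universal

variable {F : Type} [Field F] {S : Type} [Ring S]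

/-- The set of images of `⟨u⟩` in `S`. -/
def bSet (g : KMW F →+* S) : Set S := Set.range fun u : Fˣ => g (gwK u)

noncomputable def bCR (g : KMW F →+* S) : CommRing (Subring.closure (bSet g)) :=
  Subring.closureCommRingOfComm (by
    rintro x ⟨u, rfl⟩ y ⟨v, rfl⟩
    simp only
    rw [← map_mul, ← map_mul, ← gwK_mul, ← gwK_mul, mul_comm u v])

lemma univKMW (g : KMW F →+* S) (hu : IsUnit (g (mweta F))) :
    ∃! h : LaurentPolynomial (WittRing F) →+* S, h.comp (mwL (F := F)) = g := by
  letI := bCR g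
  -- the evaluation homomorphism on polynomials
  set ev : MvPolynomial Fˣ ℤ →+* Subring.closure (bSet g) :=
    MvPolynomial.eval₂Hom (Int.castRingHom _)
      (fun u => ⟨g (gwK u), Subring.subset_closure ⟨u, rfl⟩⟩) with hev
  have evX : ∀ u : Fˣ, ev (MvPolynomial.X u) =
      ⟨g (gwK u), Subring.subset_closure ⟨u, rfl⟩⟩ :=
    fun u => MvPolynomial.eval₂Hom_X' _ _ u
  have hrel : ∀ ⦃x y : MvPolynomial Fˣ ℤ⦄, GWRel F x y → ev x = ev y := by
    intro x y hr
    cases hr with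
    | sq u v =>
        rw [evX, evX]
        exact Subtype.ext (congrArg g (krel_sq u v))
    | hyp u =>
        rw [map_add, map_add, map_one, evX, evX, evX]
        apply Subtype.ext
        have h := congrArg g (krel_hyp u)
        rw [map_add, map_add, map_one] at h
        push_cast
        exact h
    | add u v h =>
        rw [map_add, map_add, evX, evX, evX, evX]
        apply Subtype.ext
        have hh := congrArg g (krel_add u v h)
        rw [map_add, map_add] at hh
        push_cast
        exact hh
    | mul u v =>
        rw [map_mul, evX, evX, evX]
        apply Subtype.ext
        push_cast
        show g (gwK u) * g (gwK v) = g (gwK (u * v))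
        rw [← map_mul, ← gwK_mul]
    | one =>
        rw [evX, map_one]
        apply Subtype.ext
        push_cast
        rw [gwK_one, map_one]
  set Ψ : GW F →+* Subring.closure (bSet g) := RingQuot.lift ⟨ev, hrel⟩ with hΨ
  set Φ : GW F →+* S := (Subring.closure (bSet g)).subtype.comp Ψ with hΦ
  have Φgw : ∀ u : Fˣ, Φ (gw u) = g (gwK u) := by
    intro u
    have h1 : Ψ (RingQuot.mkRingHom (GWRel F) (MvPolynomial.X u)) =
        ev (MvPolynomial.X u) := RingQuot.lift_mkRingHom_apply ev hrel _
    show ((Ψ (RingQuot.mkRingHom (GWRel F) (MvPolynomial.X u)) : S)) = g (gwK u)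
    rw [h1, evX]
  have Φh : Φ (hGW F) = 0 := by
    have key : g (mweta F) * g (mweta F * mw (-1 : Fˣ) + 2) = g (mweta F) * 0 := by
      rw [mul_zero, ← map_mul, eta_hyp, map_zero]
    have h0 : g (mweta F * mw (-1 : Fˣ) + 2) = 0 := hu.mul_left_cancel key
    have h2 : (1 : KMW F) + gwK (-1 : Fˣ) = mweta F * mw (-1 : Fˣ) + 2 := by
      unfold gwK
      rw [← one_add_one_eq_two]
      abel
    show Φ (1 + gw (-1 : Fˣ)) = 0
    rw [map_add, map_one, Φgw, ← map_one g, ← map_add, h2, h0]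
  set ψW : WittRing F →+* S := Ideal.Quotient.lift _ Φ (fun x hx => by
    obtain ⟨a, rfl⟩ := Ideal.mem_span_singleton'.mp hx
    rw [map_mul, Φh, mul_zero]) with hψW
  have ψWwq : ∀ x, ψW (wq F x) = Φ x := fun x => Ideal.Quotient.lift_mk _ _ _
  have hcomm : ∀ w : WittRing F, Commute (g (mweta F)) (ψW w) := by
    intro w
    obtain ⟨x, rfl⟩ := Ideal.Quotient.mk_surjective w
    have hx : (Ideal.Quotient.mk (Ideal.span {hGW F}) x : WittRing F) = wq F x := rfl
    rw [hx, ψWwq]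
    have hmem : Φ x ∈ Subring.closure (bSet g) := (Ψ x).2
    have hle : Subring.closure (bSet g) ≤ Subring.centralizer {g (mweta F)} := by
      rw [Subring.closure_le]
      rintro z ⟨u, rfl⟩
      rw [SetLike.mem_coe, Subring.mem_centralizer_iff]
      rintro t ht
      rw [Set.mem_singleton_iff] at ht
      subst ht
      simp only
      rw [← map_mul, ← map_mul, eta_comm]
    have hz := hle hmem
    rw [Subring.mem_centralizer_iff] at hz
    exact hz (g (mweta F)) rfl
  set τ : Multiplicative ℤ →* S := (Units.coeHom S).comp (zpowersHom Sˣ hu.unit) with hτ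
  have hcomm2 : ∀ (a : WittRing F) (n : Multiplicative ℤ), Commute (ψW a) (τ n) := by
    intro a n
    have h1 : Commute (ψW a) (↑hu.unit : S) := by
      rw [hu.unit_spec]
      exact (hcomm a).symm
    exact h1.units_zpow_right n.toAdd
  set hL : LaurentPolynomial (WittRing F) →+* S :=
    AddMonoidAlgebra.liftNCRingHom ψW τ hcomm2 with hhL
  have hLC : ∀ w, hL (LaurentPolynomial.C w) = ψW w := by
    intro w
    rw [← LaurentPolynomial.single_eq_C]
    show AddMonoidAlgebra.liftNC (ψW : WittRing F →+ S) ⇑τ (AddMonoidAlgebra.single 0 w) = ψW w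
    rw [AddMonoidAlgebra.liftNC_single]
    have : τ (Multiplicative.ofAdd (0 : ℤ)) = 1 := by
      rw [hτ]
      simp
    rw [this, mul_one]
    rfl
  have hLT : ∀ n : ℤ, hL (LaurentPolynomial.T n) = ↑(hu.unit ^ n) := by
    intro n
    show AddMonoidAlgebra.liftNC (ψW : WittRing F →+ S) ⇑τ (AddMonoidAlgebra.single n 1) = _
    rw [AddMonoidAlgebra.liftNC_single]
    have h1 : ((ψW : WittRing F →+ S) (1 : WittRing F)) = 1 := map_one ψW
    rw [h1, one_mul, hτ]
    simp
  have hLη : hL (mwL (mweta F)) = g (mweta F) := by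
    rw [mwL_eta, hLT 1, zpow_one, hu.unit_spec]
  have hcomp : hL.comp (mwL (F := F)) = g := by
    apply RingHom.ext
    intro x
    obtain ⟨y, rfl⟩ := RingQuot.mkRingHom_surjective _ x
    erw [RingHom.comp_apply]
    induction y using FreeAlgebra.induction with
    | grade0 a =>
        have hcast : (RingQuot.mkRingHom (MWRel F)) (algebraMap ℤ _ a) =
            ((a : ℤ) : KMW F) := by
          erw [algebraMap_int_eq, eq_intCast, map_intCast]
          rfl
        rw [hcast]
        simp only [map_intCast]
    | grade1 gen =>
        cases gen with
        | eta => exact hLη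
        | of u =>
            show hL (mwL (mw u)) = g (mw u)
            rw [mwL_mw, map_mul, map_sub, map_one, hLC, hLT, ψWwq, Φgw]
            have h1 : g (gwK u) - 1 = g (mweta F) * g (mw u) := by
              rw [← map_mul,
                show mweta F * mw u = gwK u - 1 from by unfold gwK; noncomm_ring,
                map_sub, map_one]
            rw [h1, zpow_neg_one]
            calc (↑hu.unit⁻¹ : S) * (g (mweta F) * g (mw u))
                = (↑hu.unit⁻¹ * ↑hu.unit) * g (mw u) := by
                  rw [hu.unit_spec, mul_assoc]
              _ = g (mw u) := by rw [Units.inv_mul, one_mul]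
    | mul a b ha hb =>
        rw [map_mul]
        exact ((congrArg hL (map_mul mwL (RingQuot.mkRingHom (MWRel F) a) (RingQuot.mkRingHom (MWRel F) b))).trans
          (map_mul hL (mwL (RingQuot.mkRingHom (MWRel F) a)) (mwL (RingQuot.mkRingHom (MWRel F) b)))).trans
          ((congrArg₂ (· * ·) ha hb).trans (map_mul g (RingQuot.mkRingHom (MWRel F) a) (RingQuot.mkRingHom (MWRel F) b)).symm)
    | add a b ha hb =>
        rw [map_add]
        exact ((congrArg hL (map_add mwL (RingQuot.mkRingHom (MWRel F) a) (RingQuot.mkRingHom (MWRel F) b))).trans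
          (map_add hL (mwL (RingQuot.mkRingHom (MWRel F) a)) (mwL (RingQuot.mkRingHom (MWRel F) b)))).trans
          ((congrArg₂ (· + ·) ha hb).trans (map_add g (RingQuot.mkRingHom (MWRel F) a) (RingQuot.mkRingHom (MWRel F) b)).symm)
  refine ⟨hL, hcomp, ?_⟩
  -- uniqueness
  intro h' hh'
  have hT1 : h' (LaurentPolynomial.T 1) = g (mweta F) := by
    rw [← mwL_eta, ← RingHom.comp_apply, hh']
  have e1 : (↑hu.unit : S) * h' (LaurentPolynomial.T (-1)) = 1 := by
    rw [hu.unit_spec, ← hT1, ← map_mul, ts_mul_t, map_one]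
  have hTm1 : h' (LaurentPolynomial.T (-1)) = ↑hu.unit⁻¹ := by
    calc h' (LaurentPolynomial.T (-1))
        = ↑hu.unit⁻¹ * ((↑hu.unit : S) * h' (LaurentPolynomial.T (-1))) := by
          rw [← mul_assoc, Units.inv_mul, one_mul]
      _ = ↑hu.unit⁻¹ := by rw [e1, mul_one]
  have hTn : ∀ n : ℤ, h' (LaurentPolynomial.T n) = hL (LaurentPolynomial.T n) := by
    intro n
    rw [hLT]
    cases n with
    | ofNat k =>
        have ht : (LaurentPolynomial.T (Int.ofNat k) : LaurentPolynomial (WittRing F)) =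
            LaurentPolynomial.T 1 ^ k := by
          rw [LaurentPolynomial.T_pow, mul_one]
          norm_cast
        rw [ht, map_pow, hT1]
        calc g (mweta F) ^ k = (↑hu.unit : S) ^ k := by rw [hu.unit_spec]
          _ = ↑(hu.unit ^ k) := (Units.val_pow_eq_pow_val _ _).symm
          _ = ↑(hu.unit ^ (Int.ofNat k)) := by norm_cast
    | negSucc k =>
        have ht : (LaurentPolynomial.T (Int.negSucc k) : LaurentPolynomial (WittRing F)) =
            LaurentPolynomial.T (-1) ^ (k + 1) := by
          rw [LaurentPolynomial.T_pow]
          congr 1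
          rw [Int.negSucc_eq]
          push_cast
          ring
        rw [ht, map_pow, hTm1, zpow_negSucc, ← Units.val_pow_eq_pow_val, inv_pow]
  have hCgw : ∀ u : Fˣ, h' (LaurentPolynomial.C (wq F (gw u))) =
      hL (LaurentPolynomial.C (wq F (gw u))) := by
    intro u
    have CW : (LaurentPolynomial.C (wq F (gw u)) : LaurentPolynomial (WittRing F)) =
        mwL (1 + mweta F * mw u) := by
      rw [map_add, map_one, map_mul, mwL_eta, mwL_mw]
      linear_combination (-(LaurentPolynomial.C (wq F (gw u)) - 1)) * ts_mul_t (F := F)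
    rw [CW, ← RingHom.comp_apply, hh', ← RingHom.comp_apply, hcomp]
  have hCn : ∀ w, h' (LaurentPolynomial.C w) = hL (LaurentPolynomial.C w) := by
    intro w
    obtain ⟨x, rfl⟩ := Ideal.Quotient.mk_surjective w
    have hx : (Ideal.Quotient.mk (Ideal.span {hGW F}) x : WittRing F) = wq F x := rfl
    rw [hx]
    obtain ⟨p, rfl⟩ := RingQuot.mkRingHom_surjective _ x
    clear hx
    induction p using MvPolynomial.induction_on with
    | C a =>
        have h0 : (RingQuot.mkRingHom (GWRel F)) (MvPolynomial.C a) = ((a : ℤ) : GW F) := by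
          have := eq_intCast ((RingQuot.mkRingHom (GWRel F)).comp
            (MvPolynomial.C : ℤ →+* MvPolynomial Fˣ ℤ)) a
          rw [RingHom.comp_apply] at this
          exact this
        rw [h0, map_intCast, map_intCast, map_intCast, map_intCast]
    | add p q hp hq =>
        erw [map_add, map_add, map_add, map_add, map_add, hp, hq]
    | mul_X p u hp =>
        erw [map_mul, map_mul, map_mul, map_mul, map_mul]
        rw [show (RingQuot.mkRingHom (GWRel F)) (MvPolynomial.X u) = gw u from rfl]
        rw [hp, hCgw]
  exact AddMonoidAlgebra.ringHom_ext (fun b => hCn b) (fun a => hTn a)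

end Universal
theorem stmt14 (F : Type) [Field F] :
    ∃ f : KMW F →+* LaurentPolynomial (WittRing F),
      (∀ u : Fˣ,
        f (mw u) = LaurentPolynomial.T (-1) * (LaurentPolynomial.C (wq F (gw u)) - 1)) ∧
      f (mweta F) = LaurentPolynomial.T 1 ∧
      IsUnit (f (mweta F)) ∧
      ∀ (S : Type) [Ring S] (g : KMW F →+* S), IsUnit (g (mweta F)) →
        ∃! h : LaurentPolynomial (WittRing F) →+* S, h.comp f = g := by
  refine ⟨mwL (F := F), fun u => mwL_mw u, mwL_eta, ?_, ?_⟩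
  · rw [mwL_eta]
    exact LaurentPolynomial.isUnit_T 1
  · intro S _ g hu
    exact univKMW g hu
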